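/- For positive integers g and ℓ, let n'_{g,ℓ} denote the number of gapsets of genus g all of whose Kunz coordinates lie in [ℓ, 2ℓ+1]. Then n'_{g,ℓ} ≥ Σ_{i=ℓ}^{2ℓ} n'_{g−i,ℓ}. -/

import Mathlib

def IsGapset (G : Finset ℕ) : Prop :=
  0 ∉ G ∧ ∀ z ∈ G, ∀ x y : ℕ, 0 < x → 0 < y → x + y = z → x ∈ G ∨ y ∈ G

def IsNumSgp (S : Set ℕ) : Prop :=
  0 ∈ S ∧ (∀ a ∈ S, ∀ b ∈ S, a + b ∈ S) ∧ Sᶜ.Finite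

noncomputable def mult (G : Finset ℕ) : ℕ := sInf {s : ℕ | 0 < s ∧ s ∉ G}

noncomputable def kunz (G : Finset ℕ) (i : ℕ) : ℕ := (G.filter (fun z => z % mult G = i)).card

noncomputable def gapConductor (G : Finset ℕ) : ℕ := sInf {s : ℕ | 0 < s ∧ ∀ n : ℕ, s + n ∉ G}

noncomputable def gapDepth (G : Finset ℕ) : ℕ := (gapConductor G + mult G - 1) / mult G

def KunzIneq (m : ℕ) (k : ℕ → ℕ) : Prop :=
  (∀ i j : ℕ, 1 ≤ i → i ≤ j → j ≤ m - 1 → i + j < m → k (i + j) ≤ k i + k j) ∧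
  (∀ i j : ℕ, 1 ≤ i → i ≤ j → j ≤ m - 1 → m < i + j → k (i + j - m) ≤ k i + k j + 1)

def Gamma' (g l : ℕ) : Set (Finset ℕ) :=
  {G : Finset ℕ | IsGapset G ∧ G.card = g ∧
    ∀ i : ℕ, 1 ≤ i → i < mult G → kunz G i ∈ Set.Icc l (2 * l + 1)}

noncomputable def n' (g : ℤ) (l : ℕ) : ℕ := if g < 0 then 0 else (Gamma' g.toNat l).ncard

/-!
Appending a Kunz coordinate `i ∈ [l, 2l]` to a gapset of `Γ'(g - i, l)` (raising the multiplicity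
`m` to `m + 1` and giving the residue `m` exactly `i` gaps) yields a gapset of `Γ'(g, l)`:
coordinates in `[l, 2l + 1]` satisfy all Kunz inequalities that wrap around modulo `m + 1`, and
those ending in the new residue hold because `i ≤ 2l`. A gapset is determined by its multiplicity
and Kunz coordinates, and the last coordinate recovers `i`, so these maps are jointly injective.
-/

open Finset

lemma mul_add_injective {m : ℕ} (hm : 0 < m) (r : ℕ) : Function.Injective (· * m + r) :=
  (add_left_injective r).comp (mul_left_injective₀ hm.ne')

lemma mult_mem (G : Finset ℕ) : mult G ∈ {s : ℕ | 0 < s ∧ s ∉ G} :=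
  Nat.sInf_mem ⟨G.sup id + 1, Nat.succ_pos _, fun h => by
    have := Finset.le_sup (f := id) h
    simp only [id] at this
    omega⟩

lemma mult_pos (G : Finset ℕ) : 0 < mult G := (mult_mem G).1

lemma mult_notMem (G : Finset ℕ) : mult G ∉ G := (mult_mem G).2

lemma mem_of_pos_of_lt_mult {G : Finset ℕ} {r : ℕ} (h0 : 0 < r) (h : r < mult G) : r ∈ G := by
  by_contra hr
  exact (Nat.sInf_le ⟨h0, hr⟩ : mult G ≤ r).not_gt h

lemma mult_eq_of_notMem {G : Finset ℕ} {m : ℕ} (hm : 0 < m) (hmG : m ∉ G)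
    (hG : ∀ r, 0 < r → r < m → r ∈ G) : mult G = m := by
  refine le_antisymm (Nat.sInf_le ⟨hm, hmG⟩) (not_lt.1 fun h => ?_)
  exact mult_notMem G (hG _ (mult_pos G) h)

lemma isGapset_iff {G : Finset ℕ} :
    IsGapset G ↔ 0 ∉ G ∧ ∀ x y, x ∉ G → y ∉ G → x + y ∉ G := by
  refine ⟨fun hG => ⟨hG.1, fun x y hx hy hxy => ?_⟩,
    fun hG => ⟨hG.1, fun z hz x y _ _ hxy => ?_⟩⟩
  · rcases Nat.eq_zero_or_pos x with rfl | hx0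
    · simp_all
    rcases Nat.eq_zero_or_pos y with rfl | hy0
    · simp_all
    rcases hG.2 _ hxy x y hx0 hy0 rfl with h | h <;> contradiction
  · by_contra! h
    exact hG.2 x y h.1 h.2 (hxy ▸ hz)

namespace IsGapset

variable {G : Finset ℕ} (hG : IsGapset G)
include hG

lemma add_notMem {x y : ℕ} (hx : x ∉ G) (hy : y ∉ G) : x + y ∉ G :=
  (isGapset_iff.1 hG).2 x y hx hy

lemma mul_mult_notMem (a : ℕ) : a * mult G ∉ G := by
  induction a with
  | zero => simpa using hG.1
  | succ a ih => simpa [Nat.succ_mul] using hG.add_notMem ih (mult_notMem G)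

lemma mem_of_le {a b r : ℕ} (hba : b ≤ a) (h : a * mult G + r ∈ G) :
    b * mult G + r ∈ G := by
  by_contra hb
  have : a * mult G + r = b * mult G + r + (a - b) * mult G := by
    rw [add_right_comm, ← add_mul, Nat.add_sub_cancel' hba]
  exact hG.add_notMem hb (hG.mul_mult_notMem (a - b)) (this ▸ h)

lemma lt_kunz_of_mem {a r : ℕ} (hr : r < mult G) (h : a * mult G + r ∈ G) : a < kunz G r := by
  have hsub : (range (a + 1)).image (· * mult G + r) ⊆ G.filter (· % mult G = r) := by
    simp only [subset_iff, mem_image, mem_range, mem_filter]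
    rintro _ ⟨b, hb, rfl⟩
    exact ⟨hG.mem_of_le (Nat.lt_succ_iff.1 hb) h, Nat.mul_add_mod_of_lt hr⟩
  have := card_le_card hsub
  unfold kunz
  rwa [card_image_of_injective _ (mul_add_injective (mult_pos G) r), card_range] at this

lemma kunz_le_of_notMem {a r : ℕ} (h : a * mult G + r ∉ G) : kunz G r ≤ a := by
  have hsub : G.filter (· % mult G = r) ⊆ (range a).image (· * mult G + r) := by
    simp only [subset_iff, mem_image, mem_range, mem_filter]
    rintro z ⟨hz, rfl⟩
    refine ⟨z / mult G, not_le.1 fun hle => h (hG.mem_of_le hle ?_), Nat.div_add_mod' z _⟩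
    rwa [Nat.div_add_mod']
  exact (card_le_card hsub).trans (card_image_le.trans (card_range a).le)

lemma mul_add_mem_iff {a r : ℕ} (hr : r < mult G) : a * mult G + r ∈ G ↔ a < kunz G r :=
  ⟨hG.lt_kunz_of_mem hr, fun h => by_contra fun hn => (hG.kunz_le_of_notMem hn).not_gt h⟩

lemma mem_iff {x : ℕ} : x ∈ G ↔ x / mult G < kunz G (x % mult G) := by
  conv_lhs => rw [← Nat.div_add_mod' x (mult G)]
  exact hG.mul_add_mem_iff (Nat.mod_lt _ (mult_pos G))

lemma kunz_zero : kunz G 0 = 0 :=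
  Nat.le_zero.1 (hG.kunz_le_of_notMem (by simpa using hG.1))

lemma kunz_pos {r : ℕ} (h0 : 0 < r) (hr : r < mult G) : 0 < kunz G r :=
  hG.lt_kunz_of_mem hr (by simpa using mem_of_pos_of_lt_mult h0 hr)

lemma kunz_add_le {r s : ℕ} (hrs : r + s < mult G) : kunz G (r + s) ≤ kunz G r + kunz G s := by
  have hr := (hG.mul_add_mem_iff (a := kunz G r) (by omega)).not.2 (lt_irrefl _)
  have hs := (hG.mul_add_mem_iff (a := kunz G s) (by omega)).not.2 (lt_irrefl _)
  have := hG.add_notMem hr hs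
  rw [show kunz G r * mult G + r + (kunz G s * mult G + s)
    = (kunz G r + kunz G s) * mult G + (r + s) by ring, hG.mul_add_mem_iff hrs] at this
  omega

lemma card_eq_sum_kunz : G.card = ∑ r ∈ Ico 1 (mult G), kunz G r := by
  refine card_eq_sum_card_fiberwise fun z hz => mem_Ico.2 ⟨Nat.pos_of_ne_zero fun h0 => ?_,
    Nat.mod_lt z (mult_pos G)⟩
  have := hG.mem_iff.1 hz
  rw [h0, hG.kunz_zero] at this
  exact Nat.not_lt_zero _ this

/-- Pairing `x` with `z - x` covers `[1, z]` by `G` and a reflected copy of `G`. -/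
lemma le_two_mul_card {z : ℕ} (hz : z ∈ G) : z ≤ 2 * G.card := by
  have hsub : Icc 1 z ⊆ G ∪ G.image (z - ·) := by
    intro x hx
    rw [mem_Icc] at hx
    rw [mem_union, mem_image]
    rcases hx.2.eq_or_lt with rfl | hlt
    · exact Or.inl hz
    · rcases hG.2 z hz x (z - x) (by omega) (by omega) (by omega) with h | h
      exacts [Or.inl h, Or.inr ⟨z - x, h, by omega⟩]
  have := (card_le_card hsub).trans ((card_union_le _ _).trans (add_le_add_right card_image_le _))
  rw [Nat.card_Icc] at this
  omega

end IsGapset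

lemma IsGapset.ext_of_kunz {G₁ G₂ : Finset ℕ} (h₁ : IsGapset G₁) (h₂ : IsGapset G₂)
    (hm : mult G₁ = mult G₂)
    (hk : ∀ r, 0 < r → r < mult G₁ → kunz G₁ r = kunz G₂ r) :
    G₁ = G₂ := by
  ext x
  rw [h₁.mem_iff, h₂.mem_iff, ← hm]
  rcases Nat.eq_zero_or_pos (x % mult G₁) with h0 | h0
  · rw [h0, h₁.kunz_zero, h₂.kunz_zero]
  · rw [hk _ h0 (Nat.mod_lt _ (mult_pos G₁))]

/-- The range is no restriction: `x / m < k (x % m) ≤ ∑ r < m, k r`. -/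
def ofKunz (m : ℕ) (k : ℕ → ℕ) : Finset ℕ :=
  (range (m * ∑ r ∈ range m, k r)).filter fun x => x % m ≠ 0 ∧ x / m < k (x % m)

section OfKunz

variable {m : ℕ} {k : ℕ → ℕ}

lemma mem_ofKunz (hm : 0 < m) {x : ℕ} :
    x ∈ ofKunz m k ↔ x % m ≠ 0 ∧ x / m < k (x % m) := by
  rw [ofKunz, mem_filter, mem_range, and_iff_right_iff_imp]
  rintro ⟨-, hx⟩
  have hle : k (x % m) ≤ ∑ r ∈ range m, k r :=
    single_le_sum (fun _ _ => Nat.zero_le _) (mem_range.2 (Nat.mod_lt x hm))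
  rw [mul_comm, ← Nat.div_lt_iff_lt_mul hm]
  omega

lemma mul_add_mem_ofKunz {a r : ℕ} (hr : r < m) :
    a * m + r ∈ ofKunz m k ↔ r ≠ 0 ∧ a < k r := by
  have hm : 0 < m := by omega
  rw [mem_ofKunz hm, Nat.mul_add_mod_of_lt hr, add_comm, Nat.add_mul_div_right _ _ hm,
    Nat.div_eq_of_lt hr, zero_add]

lemma mult_ofKunz (hm : 0 < m) (hk : ∀ r, 0 < r → r < m → 0 < k r) : mult (ofKunz m k) = m :=
  mult_eq_of_notMem hm (by simp [mem_ofKunz hm]) fun r h0 hr => by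
    simpa using (mul_add_mem_ofKunz (a := 0) (k := k) hr).2 ⟨h0.ne', hk r h0 hr⟩

lemma apply_eq_of_ofKunz_eq {k' : ℕ → ℕ} (h : ofKunz m k = ofKunz m k') {r : ℕ} (h0 : 0 < r)
    (hr : r < m) : k r = k' r :=
  eq_of_forall_lt_iff fun a => by
    have h₁ := mul_add_mem_ofKunz (a := a) (k := k) hr
    rw [h, mul_add_mem_ofKunz hr] at h₁
    simpa [h0.ne'] using h₁.symm

lemma KunzIneq.apply_add_le (hk : KunzIneq m k) {r s : ℕ} (hr : 0 < r) (hs : 0 < s)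
    (hrs : r + s < m) : k (r + s) ≤ k r + k s := by
  rcases le_total r s with h | h
  · exact hk.1 r s hr h (by omega) hrs
  · rw [add_comm r, add_comm (k r)]
    exact hk.1 s r hs h (by omega) (by omega)

lemma KunzIneq.apply_add_sub_le (hk : KunzIneq m k) {r s : ℕ} (hr : r < m) (hs : s < m)
    (hrs : m < r + s) : k (r + s - m) ≤ k r + k s + 1 := by
  rcases le_total r s with h | h
  · exact hk.2 r s (by omega) h (by omega) hrs
  · rw [add_comm r, add_comm (k r)]
    exact hk.2 s r (by omega) h (by omega) (by omega)

lemma isGapset_ofKunz (hm : 0 < m) (hk : KunzIneq m k) : IsGapset (ofKunz m k) := by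
  refine isGapset_iff.2 ⟨by simp [mem_ofKunz hm], fun x y hx hy => ?_⟩
  obtain ⟨a, r, hr, rfl⟩ : ∃ a r, r < m ∧ a * m + r = x :=
    ⟨x / m, x % m, Nat.mod_lt x hm, Nat.div_add_mod' x m⟩
  obtain ⟨b, s, hs, rfl⟩ : ∃ b s, s < m ∧ b * m + s = y :=
    ⟨y / m, y % m, Nat.mod_lt y hm, Nat.div_add_mod' y m⟩
  rw [mul_add_mem_ofKunz hr, not_and, not_lt] at hx
  rw [mul_add_mem_ofKunz hs, not_and, not_lt] at hy
  rcases lt_trichotomy (r + s) m with hlt | heq | hgt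
  · rw [show a * m + r + (b * m + s) = (a + b) * m + (r + s) by ring, mul_add_mem_ofKunz hlt]
    rintro ⟨hrs, hab⟩
    rcases Nat.eq_zero_or_pos r with rfl | hr0
    · simp only [zero_add] at hab hrs
      exact absurd (hy hrs) (by omega)
    rcases Nat.eq_zero_or_pos s with rfl | hs0
    · simp only [add_zero] at hab
      exact absurd (hx hr0.ne') (by omega)
    have := hk.apply_add_le hr0 hs0 hlt
    have := hx hr0.ne'
    have := hy hs0.ne'
    omega
  · rw [show a * m + r + (b * m + s) = (a + b + 1) * m + 0 by rw [← heq]; ring,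
      mul_add_mem_ofKunz hm]
    simp
  · rw [show a * m + r + (b * m + s) = (a + b + 1) * m + (r + s - m) by
      rw [add_mul, add_mul, one_mul]; omega, mul_add_mem_ofKunz (by omega)]
    rintro ⟨-, hab⟩
    have := hk.apply_add_sub_le hr hs hgt
    have := hx (by omega)
    have := hy (by omega)
    omega

lemma kunz_ofKunz (hm : 0 < m) (hpos : ∀ r, 0 < r → r < m → 0 < k r) (hk : KunzIneq m k)
    {r : ℕ} (h0 : 0 < r) (hr : r < m) : kunz (ofKunz m k) r = k r := by
  have hG := isGapset_ofKunz hm hk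
  have hmult := mult_ofKunz hm hpos
  refine eq_of_forall_lt_iff fun a => ?_
  rw [← hG.mul_add_mem_iff (hmult.symm ▸ hr), hmult, mul_add_mem_ofKunz hr]
  simp [h0.ne']

end OfKunz

noncomputable def appendKunz (G : Finset ℕ) (i : ℕ) : Finset ℕ :=
  ofKunz (mult G + 1) (Function.update (kunz G) (mult G) i)

lemma IsGapset.update_kunz_pos {G : Finset ℕ} (hG : IsGapset G) {i : ℕ} (hi : 0 < i) {r : ℕ}
    (h0 : 0 < r) (hr : r < mult G + 1) : 0 < Function.update (kunz G) (mult G) i r := by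
  rcases (Nat.lt_succ_iff.1 hr).eq_or_lt with rfl | hlt
  · rwa [Function.update_self]
  · rw [Function.update_of_ne hlt.ne]
    exact hG.kunz_pos h0 hlt

lemma eq_of_appendKunz_eq {G₁ G₂ : Finset ℕ} {i₁ i₂ : ℕ}
    (h₁ : IsGapset G₁) (h₂ : IsGapset G₂) (hi₁ : 0 < i₁) (hi₂ : 0 < i₂) (h : appendKunz G₁ i₁ = appendKunz G₂ i₂) :
    i₁ = i₂ ∧ G₁ = G₂ := by
  have hm : mult G₁ = mult G₂ := by
    have := congrArg mult h
    rwa [appendKunz, appendKunz, mult_ofKunz (Nat.succ_pos _) fun _ => h₁.update_kunz_pos hi₁,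
      mult_ofKunz (Nat.succ_pos _) fun _ => h₂.update_kunz_pos hi₂, Nat.succ_inj] at this
  rw [appendKunz, appendKunz, hm] at h
  have hk := fun r (h0 : 0 < r) hr => apply_eq_of_ofKunz_eq h h0 hr
  refine ⟨by simpa using hk (mult G₂) (mult_pos _) (Nat.lt_succ_self _),
    h₁.ext_of_kunz h₂ hm fun r h0 hr => ?_⟩
  simpa [Function.update_of_ne hr.ne, Function.update_of_ne (hm ▸ hr).ne] using
    hk r h0 (by omega)

section Append

variable {G : Finset ℕ} {g l i : ℕ} (hG : G ∈ Gamma' g l) (hi : l ≤ i) (hi' : i ≤ 2 * l)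
include hG hi hi'

lemma update_kunz_mem_Icc {r : ℕ} (h0 : 0 < r) (hr : r < mult G + 1) :
    Function.update (kunz G) (mult G) i r ∈ Set.Icc l (2 * l + 1) := by
  rcases (Nat.lt_succ_iff.1 hr).eq_or_lt with rfl | hlt
  · rw [Function.update_self]
    exact ⟨hi, by omega⟩
  · rw [Function.update_of_ne hlt.ne]
    exact hG.2.2 r h0 hlt

/-- Coordinates in `[l, 2l + 1]` satisfy the Kunz inequalities that wrap around, and `i ≤ 2l`
those that reach the new residue `mult G`. -/
lemma kunzIneq_update : KunzIneq (mult G + 1) (Function.update (kunz G) (mult G) i) := by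
  have hb := fun r h0 hr => update_kunz_mem_Icc hG hi hi' (r := r) h0 hr
  constructor
  · intro r s hr _ _ hrs
    have := hb r hr (by omega)
    have := hb s (by omega) (by omega)
    rcases (Nat.lt_succ_iff.1 hrs).eq_or_lt with heq | hlt
    · rw [heq, Function.update_self]
      simp only [Set.mem_Icc] at *
      omega
    · rw [Function.update_of_ne hlt.ne, Function.update_of_ne (by omega),
        Function.update_of_ne (by omega)]
      exact hG.1.kunz_add_le hlt
  · intro r s hr _ _ hrs
    have := hb r hr (by omega)
    have := hb s (by omega) (by omega)
    have := hb (r + s - (mult G + 1)) (by omega) (by omega)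
    simp only [Set.mem_Icc] at *
    omega

lemma appendKunz_mem_Gamma' (hl : 0 < l) : appendKunz G i ∈ Gamma' (g + i) l := by
  have hm : 0 < mult G + 1 := Nat.succ_pos _
  have hpos := fun r h0 hr => hG.1.update_kunz_pos (hl.trans_le hi) (r := r) h0 hr
  have hineq := kunzIneq_update hG hi hi'
  have hgap := isGapset_ofKunz hm hineq
  have hmult := mult_ofKunz hm hpos
  have hkunz := fun r (h0 : 0 < r) hr => kunz_ofKunz hm hpos hineq h0 hr
  refine ⟨hgap, ?_, fun r h0 hr => ?_⟩
  · rw [appendKunz, hgap.card_eq_sum_kunz, hmult, sum_Ico_succ_top (mult_pos G),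
      hkunz _ (mult_pos G) (Nat.lt_succ_self _), Function.update_self, ← hG.2.1,
      hG.1.card_eq_sum_kunz]
    congr 1
    refine sum_congr rfl fun r hr => ?_
    rw [mem_Ico] at hr
    rw [hkunz r hr.1 (by omega), Function.update_of_ne hr.2.ne]
  · rw [appendKunz, hmult] at hr
    rw [appendKunz, hkunz r h0 hr]
    exact update_kunz_mem_Icc hG hi hi' h0 hr

end Append

lemma Gamma'_finite (g l : ℕ) : (Gamma' g l).Finite :=
  (range (2 * g + 1)).powerset.finite_toSet.subset fun G hG => by
    rw [mem_coe, mem_powerset]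
    intro z hz
    have := hG.1.le_two_mul_card hz
    rw [hG.2.1] at this
    exact mem_range.2 (by omega)

lemma sum_ncard_Gamma'_le {g l : ℕ} (hl : 0 < l) {t : Finset ℕ}
    (ht : ∀ i ∈ t, l ≤ i ∧ i ≤ 2 * l ∧ i ≤ g) :
    ∑ i ∈ t, (Gamma' (g - i) l).ncard ≤ (Gamma' g l).ncard := by
  simp only [Set.ncard_eq_toFinset_card _ (Gamma'_finite _ _)]
  rw [← card_sigma]
  refine card_le_card_of_injOn (fun p => appendKunz p.2 p.1) ?_ ?_
  · rintro ⟨i, G⟩ hp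
    simp only [coe_sigma, Set.mem_sigma_iff, mem_coe, Set.Finite.mem_toFinset] at hp ⊢
    obtain ⟨hli, hi, hig⟩ := ht i hp.1
    simpa [Nat.sub_add_cancel hig] using appendKunz_mem_Gamma' hp.2 hli hi hl
  · rintro ⟨i₁, G₁⟩ hp₁ ⟨i₂, G₂⟩ hp₂ h
    simp only [coe_sigma, Set.mem_sigma_iff, mem_coe, Set.Finite.mem_toFinset] at hp₁ hp₂
    obtain ⟨rfl, rfl⟩ := eq_of_appendKunz_eq hp₁.2.1 hp₂.2.1
      (hl.trans_le (ht _ hp₁.1).1) (hl.trans_le (ht _ hp₂.1).1) h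
    rfl

lemma n'_natCast (g l : ℕ) : n' g l = (Gamma' g l).ncard := by
  simp [n']

lemma n'_sub (g i l : ℕ) :
    n' ((g : ℤ) - (i : ℤ)) l = if i ≤ g then (Gamma' (g - i) l).ncard else 0 := by
  split_ifs with h
  · rw [← Nat.cast_sub h, n'_natCast]
  · exact if_pos (by omega)

theorem n'_lower_bound_general (g l : ℕ) (hl : 0 < l) :
    ∑ i ∈ Finset.Icc l (2 * l), n' ((g : ℤ) - (i : ℤ)) l ≤ n' (g : ℤ) l := by
  simp only [n'_sub, ← sum_filter, n'_natCast]
  refine sum_ncard_Gamma'_le hl fun i hi => ?_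
  rw [mem_filter, mem_Icc] at hi
  exact ⟨hi.1.1, hi.1.2, hi.2⟩

theorem n'_lower_bound (g l : ℕ) (hg : 0 < g) (hl : 0 < l) :
    ∑ i ∈ Finset.Icc l (2 * l), n' ((g : ℤ) - (i : ℤ)) l ≤ n' (g : ℤ) l :=
  n'_lower_bound_general g l hl
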